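/- arXiv:1807.06276 — 5 statements merged into one kernel-verified Lean document; each statement's English description precedes it below -/
import Mathlib

section
/- Let φ, ψ : ℝ × ℝ^d → ℝ be C² functions (in time and space) such that ∂_t φ = (1/2)|∇φ|² + (ε/2)Δφ and -∂_t ψ = (1/2)|∇ψ|² + (ε/2)Δψ, for some ε > 0. Define ϑ := (ψ - φ)/2 and ρ := exp((φ + ψ)/ε). Then ρ solves the continuity equation ∂_t ρ + div(ρ ∇ϑ) = 0. -/
/-!
With `ρ = exp ((φ + ψ) / ε)` one has `∂ₜρ = ρ (∂ₜφ + ∂ₜψ) / ε` and `∇ρ = ρ (∇φ + ∇ψ) / ε`, so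
`⟪∇ρ, ∇ϑ⟫ = ρ (‖∇ψ‖² - ‖∇φ‖²) / (2ε)`. Substituting the two Hamilton–Jacobi–Bellman equations
into `∂ₜρ`, the quadratic gradient terms cancel against `⟪∇ρ, ∇ϑ⟫` and the viscous terms
`ρ (Δφ - Δψ) / 2` cancel against `ρ Δϑ`.
-/

open RealInnerProductSpace

/-- The Laplacian of `f : ℝ^d → ℝ` as the sum of second partial derivatives. -/
noncomputable def lap {d : ℕ} (f : EuclideanSpace ℝ (Fin d) → ℝ)
    (x : EuclideanSpace ℝ (Fin d)) : ℝ :=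
  ∑ i : Fin d, fderiv ℝ (fun y => fderiv ℝ f y (EuclideanSpace.single i 1)) x
    (EuclideanSpace.single i 1)

section Uncurry

variable {𝕜 E F G : Type*} [NontriviallyNormedField 𝕜] [NormedAddCommGroup E] [NormedSpace 𝕜 E]
  [NormedAddCommGroup F] [NormedSpace 𝕜 F] [NormedAddCommGroup G] [NormedSpace 𝕜 G]
  {n : WithTop ℕ∞} {f : E → F → G}

theorem ContDiff.of_uncurry_apply_left (hf : ContDiff 𝕜 n (Function.uncurry f)) (a : E) :
    ContDiff 𝕜 n (f a) :=
  hf.comp (contDiff_const.prodMk contDiff_id)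

theorem ContDiff.of_uncurry_apply_right (hf : ContDiff 𝕜 n (Function.uncurry f)) (b : F) :
    ContDiff 𝕜 n (fun a => f a b) :=
  hf.comp (contDiff_id.prodMk contDiff_const)

end Uncurry

section Gradient

variable {F : Type*} [NormedAddCommGroup F] [InnerProductSpace ℝ F] [CompleteSpace F]
  {f g : F → ℝ} {f' g' x : F}

theorem HasGradientAt.add (hf : HasGradientAt f f' x) (hg : HasGradientAt g g' x) :
    HasGradientAt (fun y => f y + g y) (f' + g') x := by
  rw [hasGradientAt_iff_hasFDerivAt] at *
  simpa using hf.fun_add hg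

theorem HasGradientAt.sub (hf : HasGradientAt f f' x) (hg : HasGradientAt g g' x) :
    HasGradientAt (fun y => f y - g y) (f' - g') x := by
  rw [hasGradientAt_iff_hasFDerivAt] at *
  simpa using hf.fun_sub hg

theorem HasGradientAt.div_const (hf : HasGradientAt f f' x) (c : ℝ) :
    HasGradientAt (fun y => f y / c) (c⁻¹ • f') x := by
  rw [hasGradientAt_iff_hasFDerivAt] at *
  simpa [div_eq_inv_mul] using hf.const_mul c⁻¹

theorem HasGradientAt.exp (hf : HasGradientAt f f' x) :
    HasGradientAt (fun y => Real.exp (f y)) (Real.exp (f x) • f') x := by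
  rw [hasGradientAt_iff_hasFDerivAt] at *
  simpa using hf.exp

end Gradient

section Laplacian

variable {d : ℕ} {f g : EuclideanSpace ℝ (Fin d) → ℝ} {x : EuclideanSpace ℝ (Fin d)}

theorem lap_sub (hf : ContDiff ℝ 2 f) (hg : ContDiff ℝ 2 g) :
    lap (fun y => f y - g y) x = lap f x - lap g x := by
  have hf1 : Differentiable ℝ f := hf.differentiable two_ne_zero
  have hg1 : Differentiable ℝ g := hg.differentiable two_ne_zero
  have hf2 : ∀ v, Differentiable ℝ (fun y => fderiv ℝ f y v) := fun v =>
    ((hf.fderiv_right le_rfl).clm_apply contDiff_const).differentiable one_ne_zero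
  have hg2 : ∀ v, Differentiable ℝ (fun y => fderiv ℝ g y v) := fun v =>
    ((hg.fderiv_right le_rfl).clm_apply contDiff_const).differentiable one_ne_zero
  have hfirst : ∀ v, (fun y => fderiv ℝ (fun z => f z - g z) y v)
      = fun y => fderiv ℝ f y v - fderiv ℝ g y v := fun v => by
    funext y
    rw [fderiv_fun_sub (hf1 y) (hg1 y)]
    rfl
  simp only [lap, hfirst, fderiv_fun_sub ((hf2 _) x) ((hg2 _) x)]
  simp [Finset.sum_sub_distrib]

theorem lap_div_const (f : EuclideanSpace ℝ (Fin d) → ℝ) (c : ℝ) :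
    lap (fun y => f y / c) x = lap f x / c := by
  have hdiv : ∀ h : EuclideanSpace ℝ (Fin d) → ℝ, (fun y => h y / c) = c⁻¹ • h := fun h => by
    funext y; simp [div_eq_inv_mul]
  have hfirst : ∀ v, (fun y => fderiv ℝ (fun z => f z / c) y v)
      = fun y => fderiv ℝ f y v / c := fun v => by
    rw [hdiv, fderiv_const_smul_field]
    funext y; simp [div_eq_inv_mul]
  simp only [lap, hfirst]
  simp only [hdiv, fderiv_const_smul_field]
  simp [div_eq_inv_mul, Finset.mul_sum]

end Laplacian

theorem real_inner_add_sub_eq_norm_sq_sub_norm_sq {F : Type*} [NormedAddCommGroup F]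
    [InnerProductSpace ℝ F] (x y : F) : ⟪x + y, x - y⟫ = ‖x‖ ^ 2 - ‖y‖ ^ 2 := by
  rw [inner_add_left, inner_sub_right, inner_sub_right, real_inner_comm x y,
    real_inner_self_eq_norm_sq, real_inner_self_eq_norm_sq]
  ring

theorem entropic_continuity_equation {d : ℕ} (ε : ℝ) (hε : 0 < ε)
    (φ ψ : ℝ → EuclideanSpace ℝ (Fin d) → ℝ)
    (hφ : ContDiff ℝ 2 (Function.uncurry φ)) (hψ : ContDiff ℝ 2 (Function.uncurry ψ))
    (hHJBφ : ∀ t x, deriv (fun s => φ s x) t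
      = (1/2) * ‖gradient (φ t) x‖^2 + (ε/2) * lap (φ t) x)
    (hHJBψ : ∀ t x, -deriv (fun s => ψ s x) t
      = (1/2) * ‖gradient (ψ t) x‖^2 + (ε/2) * lap (ψ t) x) :
    ∀ t x,
      deriv (fun s => Real.exp ((φ s x + ψ s x) / ε)) t
        + ⟪gradient (fun y => Real.exp ((φ t y + ψ t y) / ε)) x,
            gradient (fun y => (ψ t y - φ t y) / 2) x⟫
        + Real.exp ((φ t x + ψ t x) / ε) * lap (fun y => (ψ t y - φ t y) / 2) x = 0 := by
  intro t x
  have hφt := hφ.of_uncurry_apply_left t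
  have hψt := hψ.of_uncurry_apply_left t
  have hφx := (hφt.differentiable two_ne_zero x).hasGradientAt
  have hψx := (hψt.differentiable two_ne_zero x).hasGradientAt
  have hφs := ((hφ.of_uncurry_apply_right x).differentiable two_ne_zero t).hasDerivAt
  have hψs := ((hψ.of_uncurry_apply_right x).differentiable two_ne_zero t).hasDerivAt
  rw [((hφs.fun_add hψs).div_const ε).exp.deriv, ((hφx.add hψx).div_const ε).exp.gradient,
    ((hψx.sub hφx).div_const 2).gradient, lap_div_const, lap_sub hψt hφt,
    add_comm (gradient (φ t) x)]
  simp only [real_inner_smul_left, real_inner_smul_right,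
    real_inner_add_sub_eq_norm_sq_sub_norm_sq]
  linear_combination (norm := skip)
    Real.exp ((φ t x + ψ t x) / ε) / ε * (hHJBφ t x - hHJBψ t x)
  field_simp
  ring
end

section
/- Let φ, ψ : ℝ × ℝ^d → ℝ be C² solutions of the Hamilton–Jacobi–Bellman equations ∂_t φ = (1/2)|∇φ|² + (ε/2)Δφ and -∂_t ψ = (1/2)|∇ψ|² + (ε/2)Δψ with ε > 0. Define ϑ := (ψ - φ)/2 and ℓ := (φ + ψ)/ε. Then ∂_t ϑ + (1/2)|∇ϑ|² = -(ε²/8)(2Δℓ + |∇ℓ|²). -/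
open RealInnerProductSpace

/-! Gradient and Laplacian are linear on `C²` functions, so at each point the formula is an
algebraic consequence of the two HJB equations, in which the cross terms `⟪∇φ, ∇ψ⟫` of
`|∇ϑ|² / 2` and of `-(ε²/8) |∇ℓ|²` coincide. -/

section Gradient

variable {E : Type*} [NormedAddCommGroup E] [InnerProductSpace ℝ E] [CompleteSpace E]
  {f g : E → ℝ} {x : E}

theorem gradient_const_smul (c : ℝ) : gradient (c • f) x = c • gradient f x := by
  simp only [gradient, fderiv_const_smul_field, Pi.smul_apply, map_smul]

theorem gradient_add (hf : DifferentiableAt ℝ f x) (hg : DifferentiableAt ℝ g x) :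
    gradient (f + g) x = gradient f x + gradient g x := by
  simp only [gradient, fderiv_add hf hg, map_add]

theorem gradient_sub (hf : DifferentiableAt ℝ f x) (hg : DifferentiableAt ℝ g x) :
    gradient (f - g) x = gradient f x - gradient g x := by
  simp only [gradient, fderiv_sub hf hg, map_sub]

end Gradient

section Laplacian

variable {d : ℕ} {f g : EuclideanSpace ℝ (Fin d) → ℝ} {x : EuclideanSpace ℝ (Fin d)}

theorem lap_const_smul (c : ℝ) : lap (c • f) x = c * lap f x := by
  simp only [lap, fderiv_const_smul_field, Finset.mul_sum]
  refine Finset.sum_congr rfl fun i _ => ?_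
  change fderiv ℝ (c • fun y => fderiv ℝ f y _) x _ = _
  rw [fderiv_const_smul_field]
  rfl

theorem lap_add (hf : ContDiff ℝ 2 f) (hg : ContDiff ℝ 2 g) :
    lap (f + g) x = lap f x + lap g x := by
  have partial_differentiable {h : EuclideanSpace ℝ (Fin d) → ℝ} (hh : ContDiff ℝ 2 h) (v) :
      Differentiable ℝ fun y => fderiv ℝ h y v :=
    ((hh.fderiv_right le_rfl).clm_apply contDiff_const).differentiable one_ne_zero
  have hfg : fderiv ℝ (f + g) = fderiv ℝ f + fderiv ℝ g :=
    funext fun y => fderiv_add (hf.differentiable two_ne_zero y) (hg.differentiable two_ne_zero y)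
  simp only [lap, hfg, ← Finset.sum_add_distrib]
  refine Finset.sum_congr rfl fun i _ => ?_
  change fderiv ℝ (fun y => fderiv ℝ f y _ + fderiv ℝ g y _) x _ = _
  rw [fderiv_fun_add (partial_differentiable hf _ x) (partial_differentiable hg _ x)]
  rfl

end Laplacian

theorem acceleration_identity {E : Type*} [NormedAddCommGroup E] [InnerProductSpace ℝ E]
    {ε : ℝ} (hε : ε ≠ 0) (Dφ Dψ : E) (φ' ψ' Δφ Δψ : ℝ)
    (hφ : φ' = (1/2) * ‖Dφ‖^2 + (ε/2) * Δφ) (hψ : -ψ' = (1/2) * ‖Dψ‖^2 + (ε/2) * Δψ) :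
    (ψ' - φ') / 2 + (1/2) * ‖(2 : ℝ)⁻¹ • (Dψ - Dφ)‖^2
      = -(ε^2/8) * (2 * (ε⁻¹ * (Δφ + Δψ)) + ‖ε⁻¹ • (Dφ + Dψ)‖^2) := by
  rw [norm_smul, norm_smul, mul_pow, mul_pow, norm_sub_sq_real, norm_add_sq_real, real_inner_comm]
  simp only [Real.norm_eq_abs, sq_abs, inv_pow]
  field_simp
  linear_combination (-32) * hφ - 32 * hψ

theorem entropic_acceleration_formula {d : ℕ} (ε : ℝ) (hε : 0 < ε)
    (φ ψ : ℝ → EuclideanSpace ℝ (Fin d) → ℝ)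
    (hφ : ContDiff ℝ 2 (Function.uncurry φ)) (hψ : ContDiff ℝ 2 (Function.uncurry ψ))
    (hHJBφ : ∀ t x, deriv (fun s => φ s x) t
      = (1/2) * ‖gradient (φ t) x‖^2 + (ε/2) * lap (φ t) x)
    (hHJBψ : ∀ t x, -deriv (fun s => ψ s x) t
      = (1/2) * ‖gradient (ψ t) x‖^2 + (ε/2) * lap (ψ t) x) :
    ∀ t x,
      deriv (fun s => (ψ s x - φ s x) / 2) t
        + (1/2) * ‖gradient (fun y => (ψ t y - φ t y) / 2) x‖^2
      = -(ε^2/8) * (2 * lap (fun y => (φ t y + ψ t y) / ε) x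
          + ‖gradient (fun y => (φ t y + ψ t y) / ε) x‖^2) := by
  intro t x
  have hφ_space : ContDiff ℝ 2 (φ t) := hφ.comp (contDiff_const.prodMk contDiff_id)
  have hψ_space : ContDiff ℝ 2 (ψ t) := hψ.comp (contDiff_const.prodMk contDiff_id)
  have hφ_time : DifferentiableAt ℝ (fun s => φ s x) t :=
    ((hφ.comp (contDiff_id.prodMk contDiff_const)).differentiable two_ne_zero).differentiableAt
  have hψ_time : DifferentiableAt ℝ (fun s => ψ s x) t :=
    ((hψ.comp (contDiff_id.prodMk contDiff_const)).differentiable two_ne_zero).differentiableAt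
  have hϑ : (fun y => (ψ t y - φ t y) / 2) = (2 : ℝ)⁻¹ • (ψ t - φ t) := by
    ext y; simp [div_eq_inv_mul]
  have hℓ : (fun y => (φ t y + ψ t y) / ε) = ε⁻¹ • (φ t + ψ t) := by
    ext y; simp [div_eq_inv_mul]
  have hφ_diff : DifferentiableAt ℝ (φ t) x := hφ_space.differentiable two_ne_zero x
  have hψ_diff : DifferentiableAt ℝ (ψ t) x := hψ_space.differentiable two_ne_zero x
  rw [deriv_div_const, deriv_fun_sub hψ_time hφ_time, hϑ, hℓ, gradient_const_smul,
    gradient_const_smul, gradient_sub hψ_diff hφ_diff, gradient_add hφ_diff hψ_diff,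
    lap_const_smul, lap_add hφ_space hψ_space]
  exact acceleration_identity hε.ne' _ _ _ _ _ _ (hHJBφ t x) (hHJBψ t x)
end

section
/- Let f : ℝ^d → ℝ be smooth and solve the Hamilton–Jacobi equation ∂_t φ = (1/2)|∇φ|² with smooth solution φ : ℝ × ℝ^d → ℝ. If h : ℝ^d → ℝ is smooth and γ : ℝ → ℝ^d satisfies γ'(t) = -∇φ(t, γ(t)), then the second derivative of t ↦ h(γ(t)) equals Hess h(∇φ_t, ∇φ_t) evaluated at γ(t), where φ_t := φ(t, ·). -/
/-!
Differentiating the Hamilton–Jacobi equation in space and using the symmetry of the second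
derivative of `φ` shows that this second derivative annihilates the direction `(1, -∇φₜ x)`:
this is `∂ₜ∇φ = Hess φₜ (∇φₜ, ·)`. So the velocity `-∇φₜ (γ t)` of the flow curve has zero
derivative, and differentiating `⟪∇h (γ s), γ' s⟫` leaves only the Hessian term.
-/

open RealInnerProductSpace InnerProductSpace ContinuousLinearMap

variable {E : Type*} [NormedAddCommGroup E] [InnerProductSpace ℝ E]

theorem deriv_slice_eq_fderiv_apply {F : ℝ × E → ℝ} {t : ℝ} {x : E}
    (hF : DifferentiableAt ℝ F (t, x)) :
    deriv (fun s => F (s, x)) t = fderiv ℝ F (t, x) (1, 0) :=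
  (hF.hasFDerivAt.comp_hasDerivAt t ((hasDerivAt_id t).prodMk (hasDerivAt_const t x))).deriv

variable [CompleteSpace E]

noncomputable def spatialRiesz : ((ℝ × E) →L[ℝ] ℝ) →L[ℝ] E :=
  (toDual ℝ E).symm.toContinuousLinearEquiv.toContinuousLinearMap ∘L
    (compL ℝ E (ℝ × E) ℝ).flip (inr ℝ ℝ E)

theorem inner_spatialRiesz_left (ℓ : (ℝ × E) →L[ℝ] ℝ) (w : E) :
    ⟪spatialRiesz ℓ, w⟫ = ℓ (0, w) := by
  simp [spatialRiesz]

/-- `∇φₜ x` at `p = (t, x)` for `F = Function.uncurry φ`, written as a continuous linear image of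
`fderiv ℝ F` so that it is differentiable jointly in `(t, x)`. -/
noncomputable def spatialGradient (F : ℝ × E → ℝ) (p : ℝ × E) : E :=
  spatialRiesz (fderiv ℝ F p)

theorem gradient_slice_eq_spatialGradient {F : ℝ × E → ℝ} {t : ℝ} {x : E}
    (hF : DifferentiableAt ℝ F (t, x)) :
    gradient (fun y => F (t, y)) x = spatialGradient F (t, x) := by
  have hdual : toDual ℝ E (spatialGradient F (t, x)) = fderiv ℝ F (t, x) ∘L inr ℝ ℝ E := by
    ext w
    simp [spatialGradient, inner_spatialRiesz_left]
  refine HasGradientAt.gradient ?_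
  rw [hasGradientAt_iff_hasFDerivAt, hdual]
  exact hF.hasFDerivAt.comp x (hasFDerivAt_prodMk_right t x)

theorem hasFDerivAt_spatialGradient {F : ℝ × E → ℝ} {p : ℝ × E}
    (hF : DifferentiableAt ℝ (fderiv ℝ F) p) :
    HasFDerivAt (spatialGradient F) (spatialRiesz ∘L fderiv ℝ (fderiv ℝ F) p) p :=
  HasFDerivAt.comp (𝕜 := ℝ) (g := spatialRiesz (E := E)) p
    (spatialRiesz (E := E)).hasFDerivAt hF.hasFDerivAt

theorem fderiv_fderiv_one_neg_spatialGradient_eq_zero {F : ℝ × E → ℝ} (hF : ContDiff ℝ 2 F)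
    (hHJ : ∀ p, fderiv ℝ F p (1, 0) = 1 / 2 * ‖spatialGradient F p‖ ^ 2) (p : ℝ × E) :
    fderiv ℝ (fderiv ℝ F) p (1, -spatialGradient F p) = 0 := by
  have hF' : Differentiable ℝ (fderiv ℝ F) :=
    (hF.fderiv_right le_rfl).differentiable one_ne_zero
  set A := fderiv ℝ (fderiv ℝ F) p
  set U := spatialGradient F p
  have hsymm : IsSymmSndFDerivAt ℝ F p := hF.contDiffAt.isSymmSndFDerivAt (by simp)
  have htime := (apply ℝ ℝ ((1 : ℝ), (0 : E))).hasFDerivAt.comp p (hF' p).hasFDerivAt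
  have hspace := ((hasFDerivAt_spatialGradient (hF' p)).norm_sq).const_mul (1 / 2 : ℝ)
  rw [← funext hHJ] at hspace
  have hdiff := htime.unique hspace
  refine ContinuousLinearMap.ext fun v => ?_
  have hv := congrArg (· v) hdiff
  simp only [coe_comp, Function.comp_apply, apply_apply, smul_apply, innerSL_apply_apply,
    nsmul_eq_mul, Nat.cast_ofNat, smul_eq_mul] at hv
  have hUv : A v (0, U) = ⟪U, spatialRiesz (A v)⟫ := by
    rw [real_inner_comm, inner_spatialRiesz_left]
  have hdir : ((1 : ℝ), -U) = (1, 0) - (0, U) := by simp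
  rw [zero_apply, hsymm, hdir, map_sub, hv, hUv]
  ring

theorem hasDerivAt_spatialGradient_along_flow {F : ℝ × E → ℝ} (hF : ContDiff ℝ 2 F)
    (hHJ : ∀ p, fderiv ℝ F p (1, 0) = 1 / 2 * ‖spatialGradient F p‖ ^ 2) {γ : ℝ → E} {t : ℝ}
    (hγ : HasDerivAt γ (-spatialGradient F (t, γ t)) t) :
    HasDerivAt (fun s => spatialGradient F (s, γ s)) 0 t := by
  have hF' : Differentiable ℝ (fderiv ℝ F) :=
    (hF.fderiv_right le_rfl).differentiable one_ne_zero
  simpa [fderiv_fderiv_one_neg_spatialGradient_eq_zero hF hHJ, Function.comp_def] using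
    (hasFDerivAt_spatialGradient (hF' _)).comp_hasDerivAt t ((hasDerivAt_id t).prodMk hγ)

theorem hasDerivAt_deriv_comp_of_hasDerivAt_zero {h : E → ℝ} (hh : ContDiff ℝ 2 h)
    {γ V : ℝ → E} {t : ℝ} (hγ : ∀ s, HasDerivAt γ (V s) s) (hV : HasDerivAt V 0 t) :
    HasDerivAt (deriv fun s => h (γ s)) ⟪fderiv ℝ (gradient h) (γ t) (V t), V t⟫ t := by
  have hh' : Differentiable ℝ h := hh.differentiable two_ne_zero
  have hgrad : DifferentiableAt ℝ (gradient h) (γ t) :=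
    (toDual ℝ E).symm.toContinuousLinearEquiv.differentiableAt.comp _
      (((hh.fderiv_right le_rfl).differentiable one_ne_zero) _)
  have hfirst : deriv (fun s => h (γ s)) = fun s => ⟪gradient h (γ s), V s⟫ := by
    funext s
    rw [inner_gradient_left]
    exact ((hh' _).hasFDerivAt.comp_hasDerivAt s (hγ s)).deriv
  rw [hfirst]
  simpa using (hgrad.hasFDerivAt.comp_hasDerivAt t (hγ t)).inner ℝ hV

theorem second_derivative_along_gradient_flow {d : ℕ}
    (φ : ℝ → EuclideanSpace ℝ (Fin d) → ℝ)
    (h : EuclideanSpace ℝ (Fin d) → ℝ) (γ : ℝ → EuclideanSpace ℝ (Fin d))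
    (hφ : ContDiff ℝ 2 (Function.uncurry φ)) (hh : ContDiff ℝ 2 h)
    (hHJ : ∀ t x, deriv (fun s => φ s x) t = (1/2) * ‖gradient (φ t) x‖^2)
    (hγ : ∀ t, HasDerivAt γ (-(gradient (φ t) (γ t))) t) :
    ∀ t, deriv (deriv (fun s => h (γ s))) t
      = ⟪fderiv ℝ (gradient h) (γ t) (gradient (φ t) (γ t)), gradient (φ t) (γ t)⟫ := by
  intro t
  have hF : Differentiable ℝ (Function.uncurry φ) := hφ.differentiable two_ne_zero
  have hgrad : ∀ s x, gradient (φ s) x = spatialGradient (Function.uncurry φ) (s, x) :=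
    fun s x => gradient_slice_eq_spatialGradient (hF _)
  have hHJ' : ∀ p, fderiv ℝ (Function.uncurry φ) p (1, 0)
      = 1 / 2 * ‖spatialGradient (Function.uncurry φ) p‖ ^ 2 := by
    rintro ⟨s, x⟩
    rw [← deriv_slice_eq_fderiv_apply (hF _), ← hgrad]
    exact hHJ s x
  have hV : HasDerivAt (fun s => -gradient (φ s) (γ s)) 0 t := by
    have hU := (hasDerivAt_spatialGradient_along_flow hφ hHJ' (hgrad t _ ▸ hγ t)).neg
    rw [neg_zero] at hU
    simp only [hgrad]
    exact hU
  simpa using (hasDerivAt_deriv_comp_of_hasDerivAt_zero hh hγ hV).deriv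
end

section
/- Let H be a Hilbert space and u : [0,1] → H. Suppose that for every t ∈ [0,1] the difference quotients (u(s) - u(t))/(s - t) converge weakly in H as s → t to some limit v(t), and that v : [0,1] → H is continuous (in norm). Then u is (strongly) continuously differentiable with derivative v. -/
/-!
Testing the weak difference quotients against a fixed `w` shows that every scalar function
`s ↦ ⟪u s, w⟫` is differentiable with the continuous derivative `s ↦ ⟪v s, w⟫`, so the scalar
fundamental theorem of calculus gives `⟪u t - u 0, w⟫ = ⟪∫₀ᵗ v, w⟫` for all `w`. Hence
`u t = u 0 + ∫₀ᵗ v`, and the vector-valued fundamental theorem of calculus, applied to the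
norm-continuous `v`, makes `u` strongly differentiable with derivative `v`.
-/

open RealInnerProductSpace Set intervalIntegral

section

variable {H : Type*} [NormedAddCommGroup H] [InnerProductSpace ℝ H]

theorem hasDerivWithinAt_inner_of_tendsto_inner_slope {u : ℝ → H} {v w : H} {s : Set ℝ} {t : ℝ}
    (h : Filter.Tendsto (fun x => ⟪(x - t)⁻¹ • (u x - u t), w⟫) (nhdsWithin t (s \ {t}))
      (nhds ⟪v, w⟫)) :
    HasDerivWithinAt (fun x => ⟪u x, w⟫) ⟪v, w⟫ s t := by
  rw [hasDerivWithinAt_iff_tendsto_slope]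
  refine h.congr fun x => ?_
  simp only [slope_def_field, inner_sub_left, real_inner_smul_left]
  ring

theorem ContinuousOn.hasDerivWithinAt_integral_Icc [CompleteSpace H] {v : ℝ → H} {a b t : ℝ}
    (hv : ContinuousOn v (Icc a b)) (ht : t ∈ Icc a b) :
    HasDerivWithinAt (fun x => ∫ s in a..x, v s) (v t) (Icc a b) t := by
  have : Fact (t ∈ Icc a b) := ⟨ht⟩
  have hsub : uIcc a t ⊆ Icc a b := by
    rw [uIcc_of_le ht.1]
    exact Icc_subset_Icc_right ht.2
  exact integral_hasDerivWithinAt_right ((hv.mono hsub).intervalIntegrable)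
    (hv.stronglyMeasurableAtFilter_nhdsWithin measurableSet_Icc t) (hv t ht)

theorem sub_eq_integral_of_hasDerivWithinAt_inner [CompleteSpace H] {u v : ℝ → H} {a b : ℝ}
    (hab : a ≤ b) (hv : ContinuousOn v (Icc a b))
    (hu : ∀ w : H, ∀ t ∈ Icc a b, HasDerivWithinAt (fun s => ⟪u s, w⟫) ⟪v t, w⟫ (Icc a b) t) :
    u b - u a = ∫ t in a..b, v t := by
  refine ext_inner_left ℝ fun w => ?_
  have hvw : ContinuousOn (fun t => ⟪w, v t⟫) (Icc a b) := continuousOn_const.inner hv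
  have hvw_int : IntervalIntegrable (fun t => ⟪w, v t⟫) MeasureTheory.volume a b :=
    hvw.intervalIntegrable_of_Icc hab
  have huw : ∀ t ∈ Icc a b, HasDerivWithinAt (fun s => ⟪w, u s⟫) ⟪w, v t⟫ (Icc a b) t := by
    simpa only [real_inner_comm w] using hu w
  have hftc : ∫ t in a..b, ⟪w, v t⟫ = ⟪w, u b⟫ - ⟪w, u a⟫ :=
    integral_eq_sub_of_hasDeriv_right_of_le hab (fun t ht => (huw t ht).continuousWithinAt)
      (fun t ht => (huw t (Ioo_subset_Icc_self ht)).mono_of_mem_nhdsWithin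
        (Icc_mem_nhdsGT_of_mem ⟨ht.1.le, ht.2⟩)) hvw_int
  calc ⟪w, u b - u a⟫ = ∫ t in a..b, ⟪w, v t⟫ := by rw [inner_sub_right, hftc]
    _ = ⟪w, ∫ t in a..b, v t⟫ :=
      (innerSL ℝ w).intervalIntegral_comp_comm (hv.intervalIntegrable_of_Icc hab)

end

theorem weak_diff_quotients_plus_cont_deriv_gives_C1 {H : Type*}
    [NormedAddCommGroup H] [InnerProductSpace ℝ H] [CompleteSpace H]
    (u v : ℝ → H)
    (hw : ∀ t ∈ Set.Icc (0:ℝ) 1, ∀ w : H,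
      Filter.Tendsto (fun s => ⟪(s - t)⁻¹ • (u s - u t), w⟫)
        (nhdsWithin t (Set.Icc (0:ℝ) 1 \ {t})) (nhds ⟪v t, w⟫))
    (hv : ContinuousOn v (Set.Icc 0 1)) :
    ∀ t ∈ Set.Icc (0:ℝ) 1, HasDerivWithinAt u (v t) (Set.Icc 0 1) t := by
  have hrep : ∀ x ∈ Icc (0:ℝ) 1, u x = u 0 + ∫ s in (0:ℝ)..x, v s := by
    intro x hx
    have hsub : Icc 0 x ⊆ Icc (0:ℝ) 1 := Icc_subset_Icc_right hx.2
    rw [← sub_eq_integral_of_hasDerivWithinAt_inner hx.1 (hv.mono hsub)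
      fun w s hs => (hasDerivWithinAt_inner_of_tendsto_inner_slope (hw s (hsub hs) w)).mono hsub]
    abel
  intro t ht
  exact ((hv.hasDerivWithinAt_integral_Icc ht).const_add (u 0)).congr hrep (hrep t ht)
end

section
/- Let ρ : ℝ × ℝ^d → (0,∞) and φ : ℝ × ℝ^d → ℝ be smooth with ρ_t compactly supported probability densities (uniformly in t on compacts), satisfying the continuity equation ∂_t ρ - div(ρ ∇φ) = 0 and the Hamilton–Jacobi equation ∂_t φ = (1/2)|∇φ|². Then for every smooth compactly supported f : ℝ^d → ℝ, the map t ↦ ∫ f ρ_t dx is twice differentiable and d²/dt² ∫ f ρ_t dx = ∫ Hess f(∇φ_t, ∇φ_t) ρ_t dx. -/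
open MeasureTheory RealInnerProductSpace

open Function

variable {d : ℕ}
local notation "E" => EuclideanSpace ℝ (Fin d)

lemma inner_grad (g : E → ℝ) (x v : E) : ⟪gradient g x, v⟫ = fderiv ℝ g x v := by
  rw [gradient, ← InnerProductSpace.toDual_apply_apply, LinearIsometryEquiv.apply_symm_apply]

lemma contDiff_gradient {g : E → ℝ} (hg : ContDiff ℝ (⊤ : ℕ∞) g) : ContDiff ℝ (⊤ : ℕ∞) (gradient g) :=
  (InnerProductSpace.toDual ℝ (EuclideanSpace ℝ (Fin d))).symm.contDiff.comp
    (hg.fderiv_right (by simp))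

-- partial derivative in x
lemma hasFDerivAt_partial_x (F : ℝ × E → ℝ) (hF : ContDiff ℝ (⊤ : ℕ∞) F) (t : ℝ) (x : E) :
    HasFDerivAt (fun y => F (t, y))
      ((fderiv ℝ F (t, x)).comp (ContinuousLinearMap.inr ℝ ℝ (EuclideanSpace ℝ (Fin d)))) x :=
  (hF.differentiable (by simp) (t, x)).hasFDerivAt.comp x
    ((hasFDerivAt_const t x).prodMk (hasFDerivAt_id x))

lemma fderiv_partial_x (F : ℝ × E → ℝ) (hF : ContDiff ℝ (⊤ : ℕ∞) F) (t : ℝ) (x v : E) :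
    fderiv ℝ (fun y => F (t, y)) x v = fderiv ℝ F (t, x) (0, v) := by
  rw [(hasFDerivAt_partial_x F hF t x).fderiv]; rfl

-- partial derivative in t
lemma hasDerivAt_partial_t (F : ℝ × E → ℝ) (hF : ContDiff ℝ (⊤ : ℕ∞) F) (t : ℝ) (x : E) :
    HasDerivAt (fun s => F (s, x)) (fderiv ℝ F (t, x) (1, 0)) t := by
  have h := ((hF.differentiable (by simp) (t, x)).hasFDerivAt.comp t
    ((hasFDerivAt_id t).prodMk (hasFDerivAt_const x t))).hasDerivAt
  simpa [Function.comp_def] using h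

lemma deriv_partial_t (F : ℝ × E → ℝ) (hF : ContDiff ℝ (⊤ : ℕ∞) F) (t : ℝ) (x : E) :
    deriv (fun s => F (s, x)) t = fderiv ℝ F (t, x) (1, 0) :=
  (hasDerivAt_partial_t F hF t x).deriv

lemma contDiff_uncurry_gradient (φ : ℝ → E → ℝ) (hφ : ContDiff ℝ (⊤ : ℕ∞) (uncurry φ)) :
    ContDiff ℝ (⊤ : ℕ∞) (fun p : ℝ × E => gradient (φ p.1) p.2) := by
  have h1 : ContDiff ℝ (⊤ : ℕ∞) (fun p : ℝ × E => (fderiv ℝ (uncurry φ) p).comp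
      (ContinuousLinearMap.inr ℝ ℝ (EuclideanSpace ℝ (Fin d)))) :=
    (hφ.fderiv_right (m := (⊤ : ℕ∞)) (by simp)).clm_comp contDiff_const
  have h2 := ((InnerProductSpace.toDual ℝ (EuclideanSpace ℝ (Fin d))).symm.contDiff).comp h1
  have he : (fun p : ℝ × E => gradient (φ p.1) p.2) =
      fun p : ℝ × E => (InnerProductSpace.toDual ℝ (EuclideanSpace ℝ (Fin d))).symm
        ((fderiv ℝ (uncurry φ) p).comp (ContinuousLinearMap.inr ℝ ℝ (EuclideanSpace ℝ (Fin d)))) :=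
    funext fun p => by
      rw [gradient]
      exact congrArg _ ((hasFDerivAt_partial_x (uncurry φ) hφ p.1 p.2).fderiv)
  rw [he]; exact h2

lemma fderiv_zero_outside {g : E → ℝ} {K : Set E} (hK : IsClosed K) (h : support g ⊆ K)
    {x : E} (hx : x ∉ K) : fderiv ℝ g x = 0 := by
  have hev : g =ᶠ[nhds x] (fun _ => (0:ℝ)) := by
    filter_upwards [hK.isOpen_compl.mem_nhds hx] with y hy
    exact Function.support_subset_iff'.mp h y hy
  rw [hev.fderiv_eq, fderiv_fun_const]; rfl

lemma gradient_zero_outside {g : E → ℝ} {K : Set E} (hK : IsClosed K) (h : support g ⊆ K)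
    {x : E} (hx : x ∉ K) : gradient g x = 0 := by
  rw [gradient, fderiv_zero_outside hK h hx]; simp

lemma integrable_cc {g : E → ℝ} {K : Set E} (hK : IsCompact K) (h : Function.support g ⊆ K)
    (hg : Continuous g) : Integrable g :=
  hg.integrable_of_hasCompactSupport
    (HasCompactSupport.intro hK (Function.support_subset_iff'.mp h))

lemma hasDerivAt_integral_param (g : ℝ → E → ℝ) (hg : ContDiff ℝ (⊤ : ℕ∞) (uncurry g))
    {K : Set E} (hK : IsCompact K) (hs : ∀ s, Function.support (g s) ⊆ K) (t : ℝ) :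
    HasDerivAt (fun s => ∫ x, g s x) (∫ x, deriv (fun s => g s x) t) t := by
  classical
  set D : ℝ × E → ℝ := fun p => fderiv ℝ (uncurry g) p (1, 0) with hD
  have hDc : Continuous D := ((hg.fderiv_right (m := (⊤ : ℕ∞)) (by simp)).clm_apply contDiff_const).continuous
  obtain ⟨C, hC⟩ := ((isCompact_Icc (a := t - 1) (b := t + 1)).prod hK).exists_bound_of_continuousOn
    hDc.continuousOn
  have hDzero : ∀ s : ℝ, ∀ x ∉ K, D (s, x) = 0 := by
    intro s x hx
    have hev : (uncurry g) =ᶠ[nhds (s, x)] (fun _ => (0:ℝ)) := by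
      filter_upwards [(isOpen_univ.prod hK.isClosed.isOpen_compl).mem_nhds
        (by simp [hx] : (s, x) ∈ (Set.univ ×ˢ Kᶜ))] with p hp
      exact Function.support_subset_iff'.mp (hs p.1) p.2 hp.2
    rw [hD]; simp only
    rw [hev.fderiv_eq, fderiv_fun_const]; rfl
  have key := hasDerivAt_integral_of_dominated_loc_of_deriv_le (μ := volume)
    (F := fun s x => g s x) (F' := fun s x => D (s, x))
    (bound := K.indicator fun _ => |C|) (x₀ := t) (Metric.ball_mem_nhds t one_pos)
    (Filter.Eventually.of_forall fun s =>
      (hg.continuous.comp (Continuous.prodMk_right s)).aestronglyMeasurable)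
    (integrable_cc hK (hs t) (hg.continuous.comp (Continuous.prodMk_right t)))
    (hDc.comp (Continuous.prodMk_right t)).aestronglyMeasurable
    (Filter.Eventually.of_forall fun x => ?_) ?_ (Filter.Eventually.of_forall fun x => ?_)
  · have : (fun x => deriv (fun s => g s x) t) = fun x => D (t, x) :=
      funext fun x => deriv_partial_t (uncurry g) hg t x
    rw [this]
    exact key.2
  · intro s hsb
    by_cases hx : x ∈ K
    · rw [Set.indicator_of_mem hx]
      refine (hC (s, x) ⟨?_, hx⟩).trans (le_abs_self C)
      have := abs_lt.mp (by simpa [Real.dist_eq] using hsb)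
      constructor <;> linarith [this.1, this.2]
    · rw [Set.indicator_of_notMem hx]
      simp only [hDzero s x hx]
      simp
  · exact (integrable_indicator_iff hK.isClosed.measurableSet).2
      (integrableOn_const hK.measure_lt_top.ne)
  · intro s _
    exact hasDerivAt_partial_t (uncurry g) hg s x

lemma grad_apply (g : E → ℝ) (x : E) (i : Fin d) :
    gradient g x i = fderiv ℝ g x (EuclideanSpace.single i 1) := by
  rw [← inner_grad, PiLp.inner_apply]
  simp [EuclideanSpace.single_apply]

lemma cont_fderiv_apply (g : E → ℝ) (hg : ContDiff ℝ (⊤ : ℕ∞) g) (v : E) :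
    Continuous fun x => fderiv ℝ g x v :=
  ((hg.fderiv_right (m := (⊤ : ℕ∞)) (by simp)).clm_apply contDiff_const).continuous

lemma ibp (u w : E → ℝ) (hu : ContDiff ℝ (⊤ : ℕ∞) u) {K : Set E} (hK : IsCompact K)
    (hsu : Function.support u ⊆ K) (hw : ContDiff ℝ (⊤ : ℕ∞) w) (i : Fin d) :
    ∫ x, u x * fderiv ℝ w x (EuclideanSpace.single i 1)
      = - ∫ x, fderiv ℝ u x (EuclideanSpace.single i 1) * w x := by
  have hsu' : Function.support (fun x => fderiv ℝ u x (EuclideanSpace.single i 1)) ⊆ K := by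
    intro x hx
    by_contra hxK
    exact hx (by simp only [fderiv_zero_outside hK.isClosed hsu hxK]; rfl)
  apply integral_mul_fderiv_eq_neg_fderiv_mul_of_integrable
  · exact integrable_cc hK (fun x hx => hsu' (Function.support_mul_subset_left _ _ hx))
      ((cont_fderiv_apply u hu _).mul hw.continuous)
  · exact integrable_cc hK (fun x hx => hsu (Function.support_mul_subset_left _ _ hx))
      (hu.continuous.mul (cont_fderiv_apply w hw _))
  · exact integrable_cc hK (fun x hx => hsu (Function.support_mul_subset_left _ _ hx))
      (hu.continuous.mul hw.continuous)
  · exact fun x _ => hu.differentiable (by simp) x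
  · exact fun x _ => hw.differentiable (by simp) x

lemma integral_div_form_eq_zero (u ψ : E → ℝ) (hu : ContDiff ℝ (⊤ : ℕ∞) u) {K : Set E}
    (hK : IsCompact K) (hsu : Function.support u ⊆ K) (hψ : ContDiff ℝ (⊤ : ℕ∞) ψ) :
    ∫ x, (⟪gradient u x, gradient ψ x⟫ + u x * lap ψ x) = 0 := by
  have hw : ∀ i : Fin d, ContDiff ℝ (⊤ : ℕ∞) (fun y => fderiv ℝ ψ y (EuclideanSpace.single i 1)) :=
    fun i => (hψ.fderiv_right (m := (⊤ : ℕ∞)) (by simp)).clm_apply contDiff_const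
  have hptw : ∀ x : E, ⟪gradient u x, gradient ψ x⟫ + u x * lap ψ x =
      ∑ i : Fin d, (fderiv ℝ u x (EuclideanSpace.single i 1) *
          fderiv ℝ ψ x (EuclideanSpace.single i 1) +
        u x * fderiv ℝ (fun y => fderiv ℝ ψ y (EuclideanSpace.single i 1)) x
          (EuclideanSpace.single i 1)) := by
    intro x
    rw [Finset.sum_add_distrib, PiLp.inner_apply, lap, Finset.mul_sum]
    congr 1
    · refine Finset.sum_congr rfl fun i _ => ?_
      rw [grad_apply, grad_apply]
      simp
      ring
  have hsupp' : ∀ i : Fin d, Function.support (fun x =>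
      fderiv ℝ u x (EuclideanSpace.single i 1) * fderiv ℝ ψ x (EuclideanSpace.single i 1) +
        u x * fderiv ℝ (fun y => fderiv ℝ ψ y (EuclideanSpace.single i 1)) x
          (EuclideanSpace.single i 1)) ⊆ K := by
    intro i x hx
    by_contra hxK
    apply hx
    simp only [fderiv_zero_outside hK.isClosed hsu hxK,
      Function.support_subset_iff'.mp hsu x hxK]
    simp
  have hci : ∀ i : Fin d, Continuous (fun x =>
      fderiv ℝ u x (EuclideanSpace.single i 1) * fderiv ℝ ψ x (EuclideanSpace.single i 1) +
        u x * fderiv ℝ (fun y => fderiv ℝ ψ y (EuclideanSpace.single i 1)) x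
          (EuclideanSpace.single i 1)) := fun i =>
    ((cont_fderiv_apply u hu _).mul (cont_fderiv_apply ψ hψ _)).add
      (hu.continuous.mul (cont_fderiv_apply _ (hw i) _))
  calc ∫ x, (⟪gradient u x, gradient ψ x⟫ + u x * lap ψ x)
      = ∑ i : Fin d, ∫ x, (fderiv ℝ u x (EuclideanSpace.single i 1) *
          fderiv ℝ ψ x (EuclideanSpace.single i 1) +
        u x * fderiv ℝ (fun y => fderiv ℝ ψ y (EuclideanSpace.single i 1)) x
          (EuclideanSpace.single i 1)) := by
        rw [← integral_finset_sum _ (fun i _ => integrable_cc hK (hsupp' i) (hci i))]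
        exact integral_congr_ae (Filter.Eventually.of_forall fun x => hptw x)
    _ = 0 := by
        refine Finset.sum_eq_zero fun i _ => ?_
        rw [integral_add (integrable_cc hK (fun x hx => ?sa) ((cont_fderiv_apply u hu _).fun_mul
              (cont_fderiv_apply ψ hψ _)))
            (integrable_cc hK (fun x hx => hsu (Function.support_mul_subset_left _ _ hx))
              (hu.continuous.mul (cont_fderiv_apply _ (hw i) _))),
          ibp u _ hu hK hsu (hw i) i]
        · ring
        case sa =>
          by_contra hxK
          apply hx
          simp only [fderiv_zero_outside hK.isClosed hsu hxK]
          simp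

lemma symm2 {X : Type*} [NormedAddCommGroup X] [NormedSpace ℝ X] (F : X → ℝ)
    (hF : ContDiff ℝ (⊤ : ℕ∞) F) (x v w : X) :
    fderiv ℝ (fderiv ℝ F) x v w = fderiv ℝ (fderiv ℝ F) x w v :=
  (hF.contDiffAt.isSymmSndFDerivAt (by rw [minSmoothness_of_isRCLikeNormedField]; exact (WithTop.coe_le_coe.mpr le_top : ((2 : ℕ∞) : WithTop ℕ∞) ≤ ((⊤ : ℕ∞) : WithTop ℕ∞)))).eq v w

lemma hasDerivAt_fderiv_partial (φ : ℝ → E → ℝ) (hφ : ContDiff ℝ (⊤ : ℕ∞) (uncurry φ)) (t : ℝ)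
    (x v : E) :
    HasDerivAt (fun s => fderiv ℝ (φ s) x v)
      (fderiv ℝ (fun y => deriv (fun s => φ s y) t) x v) t := by
  set G : ℝ × E → (ℝ × E) →L[ℝ] ℝ := fderiv ℝ (uncurry φ) with hG
  have hGc : ContDiff ℝ (⊤ : ℕ∞) G := hφ.fderiv_right (m := (⊤ : ℕ∞)) (by simp)
  -- t-derivative of s ↦ G (s, x)
  have h1 : HasDerivAt (fun s => G (s, x)) (fderiv ℝ G (t, x) (1, 0)) t := by
    have := ((hGc.differentiable (by simp) (t, x)).hasFDerivAt.comp t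
      ((hasFDerivAt_id t).prodMk (hasFDerivAt_const x t))).hasDerivAt
    simpa [Function.comp_def] using this
  have h2 : HasDerivAt (fun s => G (s, x) (0, v)) (fderiv ℝ G (t, x) (1, 0) (0, v)) t := by
    have := h1.clm_apply (hasDerivAt_const t ((0 : ℝ), v))
    simpa using this
  have h3 : (fun s => fderiv ℝ (φ s) x v) = fun s => G (s, x) (0, v) :=
    funext fun s => fderiv_partial_x (uncurry φ) hφ s x v
  rw [h3]
  convert h2 using 1
  -- value identification
  have h4 : HasFDerivAt (fun y => G (t, y)) ((fderiv ℝ G (t, x)).comp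
      (ContinuousLinearMap.inr ℝ ℝ (EuclideanSpace ℝ (Fin d)))) x :=
    (hGc.differentiable (by simp) (t, x)).hasFDerivAt.comp x
      ((hasFDerivAt_const t x).prodMk (hasFDerivAt_id x))
  have h5 : HasFDerivAt (fun y => G (t, y) ((1 : ℝ), (0 : E)))
      (((fderiv ℝ G (t, x)).comp (ContinuousLinearMap.inr ℝ ℝ (EuclideanSpace ℝ (Fin d)))).flip
        ((1 : ℝ), (0 : E))) x := by
    have := h4.clm_apply (hasFDerivAt_const ((1 : ℝ), (0 : E)) x)
    rw [ContinuousLinearMap.comp_zero, zero_add] at this; exact this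
  have h6 : (fun y => deriv (fun s => φ s y) t) = fun y => G (t, y) ((1 : ℝ), (0 : E)) :=
    funext fun y => deriv_partial_t (uncurry φ) hφ t y
  rw [h6, h5.fderiv]
  have := symm2 (uncurry φ) hφ (t, x) (0, v) (1, 0)
  simpa using this

lemma hess_inner (ψ : E → ℝ) (hψ : ContDiff ℝ (⊤ : ℕ∞) ψ) (x v w : E) :
    ⟪fderiv ℝ (gradient ψ) x v, w⟫ = fderiv ℝ (fderiv ℝ ψ) x v w := by
  have hgd : DifferentiableAt ℝ (gradient ψ) x :=
    (contDiff_gradient hψ).differentiable (by simp) x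
  have h1 : HasFDerivAt (fun y => ⟪gradient ψ y, w⟫)
      ((fderivInnerCLM ℝ (gradient ψ x, w)).comp
        ((fderiv ℝ (gradient ψ) x).prod 0)) x :=
    HasFDerivAt.inner ℝ hgd.hasFDerivAt (hasFDerivAt_const w x)
  have h2 : HasFDerivAt (fun y => fderiv ℝ ψ y w)
      ((fderiv ℝ (fderiv ℝ ψ) x).flip w) x := by
    have h := ((hψ.fderiv_right (m := (⊤ : ℕ∞)) (by simp)).differentiable (by simp) x).hasFDerivAt.clm_apply
      (hasFDerivAt_const w x)
    rw [ContinuousLinearMap.comp_zero, zero_add] at h; exact h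
  have heq : (fun y => ⟪gradient ψ y, w⟫) = fun y => fderiv ℝ ψ y w :=
    funext fun y => inner_grad ψ y w
  have := (heq ▸ h1).unique h2
  calc ⟪fderiv ℝ (gradient ψ) x v, w⟫
      = ((fderivInnerCLM ℝ (gradient ψ x, w)).comp
        ((fderiv ℝ (gradient ψ) x).prod 0)) v := by
        simp [fderivInnerCLM_apply]
    _ = ((fderiv ℝ (fderiv ℝ ψ) x).flip w) v := by rw [this]
    _ = fderiv ℝ (fderiv ℝ ψ) x v w := rfl

lemma hess_symm (ψ : E → ℝ) (hψ : ContDiff ℝ (⊤ : ℕ∞) ψ) (x v w : E) :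
    ⟪fderiv ℝ (gradient ψ) x v, w⟫ = ⟪fderiv ℝ (gradient ψ) x w, v⟫ := by
  rw [hess_inner ψ hψ x v w, hess_inner ψ hψ x w v, symm2 ψ hψ x v w]

lemma fderiv_half_norm_sq_grad (ψ : E → ℝ) (hψ : ContDiff ℝ (⊤ : ℕ∞) ψ) (x v : E) :
    fderiv ℝ (fun y => 1 / 2 * ‖gradient ψ y‖ ^ 2) x v
      = ⟪fderiv ℝ (gradient ψ) x v, gradient ψ x⟫ := by
  have hgd : DifferentiableAt ℝ (gradient ψ) x :=
    (contDiff_gradient hψ).differentiable (by simp) x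
  have h1 : HasFDerivAt (fun y => ⟪gradient ψ y, gradient ψ y⟫)
      ((fderivInnerCLM ℝ (gradient ψ x, gradient ψ x)).comp
        ((fderiv ℝ (gradient ψ) x).prod (fderiv ℝ (gradient ψ) x))) x :=
    HasFDerivAt.inner ℝ hgd.hasFDerivAt hgd.hasFDerivAt
  have h2 := h1.const_mul (1 / 2 : ℝ)
  have heq : (fun y => 1 / 2 * ‖gradient ψ y‖ ^ 2)
      = fun y => (1 / 2 : ℝ) * ⟪gradient ψ y, gradient ψ y⟫ :=
    funext fun y => by rw [real_inner_self_eq_norm_sq]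
  rw [heq, h2.fderiv]
  simp only [fderivInnerCLM_apply, PiLp.inner_apply, RCLike.inner_apply, conj_trivial,
    ContinuousLinearMap.coe_comp', Function.comp_apply, ContinuousLinearMap.prod_apply,
    ContinuousLinearMap.smul_apply, smul_eq_mul]
  rw [Finset.sum_congr rfl fun j _ => mul_comm (gradient ψ x j) (fderiv ℝ (gradient ψ) x v j)]
  ring

lemma cont_lap (ψ : E → ℝ) (hψ : ContDiff ℝ (⊤ : ℕ∞) ψ) : Continuous (lap ψ) := by
  unfold lap
  exact continuous_finset_sum _ fun i _ =>
    cont_fderiv_apply _ ((hψ.fderiv_right (m := (⊤ : ℕ∞)) (by simp)).clm_apply contDiff_const) _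

lemma key_split (v ρt ψ : E → ℝ) (hv : ContDiff ℝ (⊤ : ℕ∞) v) (hρt : ContDiff ℝ (⊤ : ℕ∞) ρt)
    (hψ : ContDiff ℝ (⊤ : ℕ∞) ψ) {K : Set E} (hK : IsCompact K) (hsv : Function.support v ⊆ K) :
    ∫ x, v x * (⟪gradient ρt x, gradient ψ x⟫ + ρt x * lap ψ x)
      = - ∫ x, fderiv ℝ v x (gradient ψ x) * ρt x := by
  have hu : ContDiff ℝ (⊤ : ℕ∞) (fun x => v x * ρt x) := hv.mul hρt
  have hsu : Function.support (fun x => v x * ρt x) ⊆ K :=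
    fun x hx => hsv (Function.support_mul_subset_left _ _ hx)
  have h0 := integral_div_form_eq_zero (fun x => v x * ρt x) ψ hu hK hsu hψ
  have hpt : ∀ x : E, ⟪gradient (fun x => v x * ρt x) x, gradient ψ x⟫
      + (fun x => v x * ρt x) x * lap ψ x
      = v x * (⟪gradient ρt x, gradient ψ x⟫ + ρt x * lap ψ x)
        + fderiv ℝ v x (gradient ψ x) * ρt x := by
    intro x
    rw [inner_grad, fderiv_fun_mul (hv.differentiable (by simp) x) (hρt.differentiable (by simp) x)]
    simp only [ContinuousLinearMap.add_apply, ContinuousLinearMap.smul_apply, smul_eq_mul]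
    rw [← inner_grad ρt x (gradient ψ x)]
    ring
  -- continuity facts
  have hc1 : Continuous (fun x => v x * (⟪gradient ρt x, gradient ψ x⟫ + ρt x * lap ψ x)) :=
    hv.continuous.mul
      (((ContDiff.inner ℝ (contDiff_gradient hρt) (contDiff_gradient hψ)).continuous).add
        (hρt.continuous.mul (cont_lap ψ hψ)))
  have hc2 : Continuous (fun x => fderiv ℝ v x (gradient ψ x) * ρt x) :=
    (((hv.fderiv_right (m := (⊤ : ℕ∞)) (by simp)).clm_apply (contDiff_gradient hψ)).continuous).mul
      hρt.continuous
  have hs1 : Function.support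
      (fun x => v x * (⟪gradient ρt x, gradient ψ x⟫ + ρt x * lap ψ x)) ⊆ K :=
    fun x hx => hsv (Function.support_mul_subset_left _ _ hx)
  have hs2 : Function.support (fun x => fderiv ℝ v x (gradient ψ x) * ρt x) ⊆ K := by
    intro x hx
    by_contra hxK
    apply hx
    simp only [fderiv_zero_outside hK.isClosed hsv hxK]
    simp
  have h1 : ∫ x, (⟪gradient (fun x => v x * ρt x) x, gradient ψ x⟫
      + (fun x => v x * ρt x) x * lap ψ x)
      = (∫ x, v x * (⟪gradient ρt x, gradient ψ x⟫ + ρt x * lap ψ x))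
        + ∫ x, fderiv ℝ v x (gradient ψ x) * ρt x := by
    rw [← integral_add (integrable_cc hK hs1 hc1) (integrable_cc hK hs2 hc2)]
    exact integral_congr_ae (Filter.Eventually.of_forall hpt)
  rw [h1] at h0
  linarith

theorem second_order_differentiation_along_geodesics_smooth {d : ℕ}
    (ρ φ : ℝ → EuclideanSpace ℝ (Fin d) → ℝ)
    (hρ : ContDiff ℝ (⊤ : ℕ∞) (Function.uncurry ρ)) (hφ : ContDiff ℝ (⊤ : ℕ∞) (Function.uncurry φ))
    (hρnn : ∀ t x, 0 ≤ ρ t x)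
    (hρ1 : ∀ t, ∫ x, ρ t x = 1)
    (K : Set (EuclideanSpace ℝ (Fin d))) (hK : IsCompact K)
    (hsupp : ∀ t, Function.support (ρ t) ⊆ K)
    (hce : ∀ t x, deriv (fun s => ρ s x) t
      - (⟪gradient (ρ t) x, gradient (φ t) x⟫ + ρ t x * lap (φ t) x) = 0)
    (hHJ : ∀ t x, deriv (fun s => φ s x) t = (1/2) * ‖gradient (φ t) x‖^2)
    (f : EuclideanSpace ℝ (Fin d) → ℝ) (hf : ContDiff ℝ (⊤ : ℕ∞) f)
    (hfc : HasCompactSupport f) :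
    (∀ t, DifferentiableAt ℝ (fun s => ∫ x, f x * ρ s x) t) ∧
    ∀ t, HasDerivAt (deriv (fun s => ∫ x, f x * ρ s x))
      (∫ x, ⟪fderiv ℝ (gradient f) x (gradient (φ t) x), gradient (φ t) x⟫ * ρ t x) t := by
  have hρx : ∀ t, ContDiff ℝ (⊤ : ℕ∞) (ρ t) := fun t => hρ.comp (contDiff_const.prodMk contDiff_id)
  have hφx : ∀ t, ContDiff ℝ (⊤ : ℕ∞) (φ t) := fun t => hφ.comp (contDiff_const.prodMk contDiff_id)
  have hgf : ContDiff ℝ (⊤ : ℕ∞) (gradient f) := contDiff_gradient hf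
  have hsf : Function.support f ⊆ tsupport f := subset_tsupport f
  have hgf0 : ∀ x ∉ tsupport f, gradient f x = 0 := fun x hx =>
    gradient_zero_outside (isClosed_tsupport f) hsf hx
  have hB : ∀ t x, HasDerivAt (fun s => ρ s x)
      (⟪gradient (ρ t) x, gradient (φ t) x⟫ + ρ t x * lap (φ t) x) t := by
    intro t x
    have h1 := hasDerivAt_partial_t (Function.uncurry ρ) hρ t x
    have h2 : fderiv ℝ (Function.uncurry ρ) (t, x) (1, 0)
        = ⟪gradient (ρ t) x, gradient (φ t) x⟫ + ρ t x * lap (φ t) x := by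
      rw [← deriv_partial_t (Function.uncurry ρ) hρ t x]
      exact sub_eq_zero.mp (hce t x)
    rwa [h2] at h1
  have hD1 : ∀ t, HasDerivAt (fun s => ∫ x, f x * ρ s x)
      (- ∫ x, ⟪gradient f x, gradient (φ t) x⟫ * ρ t x) t := by
    intro t
    have hg1 : ContDiff ℝ (⊤ : ℕ∞) (Function.uncurry fun s x => f x * ρ s x) :=
      (hf.comp contDiff_snd).mul hρ
    have hs1 : ∀ s, Function.support (fun x => f x * ρ s x) ⊆ tsupport f :=
      fun s x hx => hsf (Function.support_mul_subset_left _ _ hx)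
    have H := hasDerivAt_integral_param _ hg1 hfc hs1 t
    have hval : ∫ x, deriv (fun s => f x * ρ s x) t
        = - ∫ x, ⟪gradient f x, gradient (φ t) x⟫ * ρ t x := by
      have e1 : ∀ x : EuclideanSpace ℝ (Fin d), deriv (fun s => f x * ρ s x) t
          = f x * (⟪gradient (ρ t) x, gradient (φ t) x⟫ + ρ t x * lap (φ t) x) :=
        fun x => (((hB t x).const_mul (f x))).deriv
      rw [integral_congr_ae (Filter.Eventually.of_forall e1),
        key_split f (ρ t) (φ t) hf (hρx t) (hφx t) hfc hsf]
      congr 1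
      exact integral_congr_ae (Filter.Eventually.of_forall fun x => by simp only [inner_grad])
    rwa [hval] at H
  refine ⟨fun t => (hD1 t).differentiableAt, ?_⟩
  intro t
  have hderiv : deriv (fun s => ∫ x, f x * ρ s x)
      = fun t => - ∫ x, ⟪gradient f x, gradient (φ t) x⟫ * ρ t x :=
    funext fun t => (hD1 t).deriv
  -- second derivative
  have hbρ : ContDiff ℝ (⊤ : ℕ∞)
      (Function.uncurry fun s x => ⟪gradient f x, gradient (φ s) x⟫ * ρ s x) :=
    (ContDiff.inner ℝ (hgf.comp contDiff_snd) (contDiff_uncurry_gradient φ hφ)).mul hρ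
  have hs2 : ∀ s, Function.support
      (fun x => ⟪gradient f x, gradient (φ s) x⟫ * ρ s x) ⊆ tsupport f := by
    intro s x hx
    by_contra hxK
    apply hx
    simp [hgf0 x hxK]
  have H2 := hasDerivAt_integral_param _ hbρ hfc hs2 t
  have hA : ∀ x, HasDerivAt (fun s => ⟪gradient f x, gradient (φ s) x⟫)
      (⟪fderiv ℝ (gradient (φ t)) x (gradient f x), gradient (φ t) x⟫) t := by
    intro x
    have h1 := hasDerivAt_fderiv_partial φ hφ t x (gradient f x)
    have heq : (fun s => fderiv ℝ (φ s) x (gradient f x))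
        = fun s => ⟪gradient f x, gradient (φ s) x⟫ :=
      funext fun s => by rw [real_inner_comm, inner_grad]
    rw [heq] at h1
    have hval : fderiv ℝ (fun y => deriv (fun s => φ s y) t) x (gradient f x)
        = ⟪fderiv ℝ (gradient (φ t)) x (gradient f x), gradient (φ t) x⟫ := by
      have hHJ' : (fun y => deriv (fun s => φ s y) t)
          = fun y => 1 / 2 * ‖gradient (φ t) y‖ ^ 2 := funext fun y => hHJ t y
      rw [hHJ', fderiv_half_norm_sq_grad (φ t) (hφx t)]
    rwa [hval] at h1
  have hderiv2 : ∀ x, deriv (fun s => ⟪gradient f x, gradient (φ s) x⟫ * ρ s x) t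
      = ⟪fderiv ℝ (gradient (φ t)) x (gradient f x), gradient (φ t) x⟫ * ρ t x
        + ⟪gradient f x, gradient (φ t) x⟫ *
          (⟪gradient (ρ t) x, gradient (φ t) x⟫ + ρ t x * lap (φ t) x) :=
    fun x => ((hA x).mul (hB t x)).deriv
  have hfderiv_b : ∀ x, fderiv ℝ (fun y => ⟪gradient f y, gradient (φ t) y⟫) x
        (gradient (φ t) x)
      = ⟪gradient f x, fderiv ℝ (gradient (φ t)) x (gradient (φ t) x)⟫
        + ⟪fderiv ℝ (gradient f) x (gradient (φ t) x), gradient (φ t) x⟫ := by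
    intro x
    have h1 := HasFDerivAt.inner ℝ ((hgf.differentiable (by simp) x).hasFDerivAt)
      (((contDiff_gradient (hφx t)).differentiable (by simp) x).hasFDerivAt)
    rw [h1.fderiv]
    simp [fderivInnerCLM_apply]
  have hsymA : ∀ x, ⟪fderiv ℝ (gradient (φ t)) x (gradient f x), gradient (φ t) x⟫
      = ⟪gradient f x, fderiv ℝ (gradient (φ t)) x (gradient (φ t) x)⟫ := by
    intro x
    rw [hess_symm (φ t) (hφx t) x (gradient f x) (gradient (φ t) x), real_inner_comm]
  -- integrability facts
  have cT : Continuous (fun x =>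
      ⟪fderiv ℝ (gradient f) x (gradient (φ t) x), gradient (φ t) x⟫ * ρ t x) :=
    ((ContDiff.inner ℝ ((hgf.fderiv_right (m := (⊤ : ℕ∞)) (by simp)).clm_apply
      (contDiff_gradient (hφx t))) (contDiff_gradient (hφx t))).mul (hρx t)).continuous
  have sT : Function.support (fun x =>
      ⟪fderiv ℝ (gradient f) x (gradient (φ t) x), gradient (φ t) x⟫ * ρ t x)
      ⊆ tsupport f := by
    intro x hx
    by_contra hxK
    apply hx
    have : fderiv ℝ (gradient f) x = 0 := by
      have hev : gradient f =ᶠ[nhds x] (fun _ => 0) := by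
        filter_upwards [(isClosed_tsupport f).isOpen_compl.mem_nhds hxK] with y hy
        exact hgf0 y hy
      rw [hev.fderiv_eq, fderiv_fun_const]; rfl
    simp only [this]
    simp
  have cS : Continuous (fun x =>
      ⟪gradient f x, fderiv ℝ (gradient (φ t)) x (gradient (φ t) x)⟫ * ρ t x) :=
    ((ContDiff.inner ℝ hgf (((contDiff_gradient (hφx t)).fderiv_right (m := (⊤ : ℕ∞))
      (by simp)).clm_apply (contDiff_gradient (hφx t)))).mul (hρx t)).continuous
  have sS : Function.support (fun x =>
      ⟪gradient f x, fderiv ℝ (gradient (φ t)) x (gradient (φ t) x)⟫ * ρ t x)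
      ⊆ tsupport f := by
    intro x hx
    by_contra hxK
    exact hx (by simp [hgf0 x hxK])
  have cA : Continuous (fun x =>
      ⟪fderiv ℝ (gradient (φ t)) x (gradient f x), gradient (φ t) x⟫ * ρ t x) :=
    ((ContDiff.inner ℝ (((contDiff_gradient (hφx t)).fderiv_right (m := (⊤ : ℕ∞))
      (by simp)).clm_apply hgf) (contDiff_gradient (hφx t))).mul (hρx t)).continuous
  have sA : Function.support (fun x =>
      ⟪fderiv ℝ (gradient (φ t)) x (gradient f x), gradient (φ t) x⟫ * ρ t x)
      ⊆ tsupport f := by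
    intro x hx
    by_contra hxK
    exact hx (by simp [hgf0 x hxK])
  have cbh : Continuous (fun x => ⟪gradient f x, gradient (φ t) x⟫ *
      (⟪gradient (ρ t) x, gradient (φ t) x⟫ + ρ t x * lap (φ t) x)) :=
    (ContDiff.inner ℝ hgf (contDiff_gradient (hφx t))).continuous.mul
      (((ContDiff.inner ℝ (contDiff_gradient (hρx t))
        (contDiff_gradient (hφx t))).continuous).add
        ((hρx t).continuous.mul (cont_lap (φ t) (hφx t))))
  have sbh : Function.support (fun x => ⟪gradient f x, gradient (φ t) x⟫ *
      (⟪gradient (ρ t) x, gradient (φ t) x⟫ + ρ t x * lap (φ t) x)) ⊆ tsupport f := by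
    intro x hx
    by_contra hxK
    exact hx (by simp [hgf0 x hxK])
  have hkey2 : ∫ x, deriv (fun s => ⟪gradient f x, gradient (φ s) x⟫ * ρ s x) t
      = - ∫ x, ⟪fderiv ℝ (gradient f) x (gradient (φ t) x), gradient (φ t) x⟫ * ρ t x := by
    rw [integral_congr_ae (Filter.Eventually.of_forall hderiv2),
      integral_add (integrable_cc hfc sA cA) (integrable_cc hfc sbh cbh),
      key_split (fun x => ⟪gradient f x, gradient (φ t) x⟫) (ρ t) (φ t)
        (ContDiff.inner ℝ hgf (contDiff_gradient (hφx t))) (hρx t) (hφx t) hfc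
        (fun x hx => by by_contra hxK; exact hx (by simp [hgf0 x hxK]))]
    have e2 : ∀ x : EuclideanSpace ℝ (Fin d),
        fderiv ℝ (fun y => ⟪gradient f y, gradient (φ t) y⟫) x (gradient (φ t) x) * ρ t x
        = ⟪gradient f x, fderiv ℝ (gradient (φ t)) x (gradient (φ t) x)⟫ * ρ t x
          + ⟪fderiv ℝ (gradient f) x (gradient (φ t) x), gradient (φ t) x⟫ * ρ t x :=
      fun x => by rw [hfderiv_b x]; ring
    rw [integral_congr_ae (Filter.Eventually.of_forall e2),
      integral_add (integrable_cc hfc sS cS) (integrable_cc hfc sT cT)]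
    have e3 : ∫ x, ⟪fderiv ℝ (gradient (φ t)) x (gradient f x), gradient (φ t) x⟫ * ρ t x
        = ∫ x, ⟪gradient f x, fderiv ℝ (gradient (φ t)) x (gradient (φ t) x)⟫ * ρ t x :=
      integral_congr_ae (Filter.Eventually.of_forall fun x => by simp only [hsymA x])
    linarith [e3]
  rw [hkey2] at H2
  rw [hderiv]
  simpa using H2.fun_neg
end
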